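/- arXiv:1211.3828 — 8 statements merged into one kernel-verified Lean document; each statement's English description precedes it below -/
import Mathlib

section
/- A Skolem sequence of order t exists only if t ≡ 0 or 1 (mod 4). -/
/-!
Each pair of a Skolem sequence of order `t` contributes `u i + v i = 2 u i + i` to the sum
`1 + ⋯ + 2t = t (2t + 1)`, so `4 ∑ u i + t (t + 1) = 2t (2t + 1)`, i.e. `4 ∑ u i = t (3t + 1)`.
Since `t (3t + 1) ≡ 0, 0, 2, 2 (mod 4)` for `t ≡ 0, 1, 2, 3`, only `t ≡ 0, 1 (mod 4)` survive.
-/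

/-- A Skolem sequence of order `t`, as a collection of pairs `(u i, v i)`, `1 ≤ i ≤ t`,
with `v i - u i = i` whose entries partition `{1, ..., 2t}`. -/
def IsSkolem (t : ℕ) (u v : ℕ → ℕ) : Prop :=
  (∀ i ∈ Finset.Icc 1 t, v i = u i + i) ∧
  (Finset.Icc 1 t).val.bind (fun i => ({u i, v i} : Multiset ℕ)) =
    (Finset.Icc 1 (2 * t)).val

open Finset

theorem Finset.sum_Icc_one_id_mul_two (n : ℕ) : (∑ i ∈ Icc 1 n, i) * 2 = n * (n + 1) := by
  induction n with
  | zero => simp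
  | succ n ih =>
    rw [sum_Icc_succ_top (by omega), add_mul, ih]
    ring

theorem Nat.mod_four_eq_zero_or_one_of_four_dvd (t : ℕ) (h : 4 ∣ t * (3 * t + 1)) :
    t % 4 = 0 ∨ t % 4 = 1 := by
  rw [Nat.dvd_iff_mod_eq_zero, Nat.mul_mod, Nat.add_mod, Nat.mul_mod 3] at h
  have : t % 4 < 4 := Nat.mod_lt t (by norm_num)
  interval_cases t % 4 <;> simp_all

namespace IsSkolem

variable {t : ℕ} {u v : ℕ → ℕ}

theorem sum_add_eq_sum_Icc (h : IsSkolem t u v) :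
    ∑ i ∈ Icc 1 t, (u i + v i) = ∑ k ∈ Icc 1 (2 * t), k := by
  have := congrArg Multiset.sum h.2
  rw [Multiset.sum_bind] at this
  simpa only [Finset.sum, Multiset.insert_eq_cons, Multiset.sum_cons, Multiset.sum_singleton,
    Multiset.map_id'] using this

theorem four_mul_sum_eq (h : IsSkolem t u v) :
    4 * ∑ i ∈ Icc 1 t, u i = t * (3 * t + 1) := by
  have hpairs : ∑ i ∈ Icc 1 t, (u i + v i) = 2 * ∑ i ∈ Icc 1 t, u i + ∑ i ∈ Icc 1 t, i := by
    rw [mul_sum, ← sum_add_distrib]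
    exact sum_congr rfl fun i hi => by rw [h.1 i hi]; ring
  have hgauss := sum_Icc_one_id_mul_two t
  have htotal := sum_Icc_one_id_mul_two (2 * t)
  rw [← h.sum_add_eq_sum_Icc, hpairs] at htotal
  linarith

end IsSkolem

/-- A Skolem sequence of order `t` exists only if `t ≡ 0` or `1 (mod 4)`. -/
theorem stmt_2 (t : ℕ) (u v : ℕ → ℕ) (h : IsSkolem t u v) :
    t % 4 = 0 ∨ t % 4 = 1 :=
  Nat.mod_four_eq_zero_or_one_of_four_dvd t ⟨_, h.four_mul_sum_eq.symm⟩
end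

section
/- A hooked Skolem sequence of order t exists only if t ≡ 2 or 3 (mod 4). -/
/-- A hooked Skolem sequence of order `t`, as a collection of pairs `(u i, v i)`,
`1 ≤ i ≤ t`, with `v i - u i = i` whose entries partition `{1, ..., 2t+1} \ {2t}`. -/
def IsHookedSkolem (t : ℕ) (u v : ℕ → ℕ) : Prop :=
  (∀ i ∈ Finset.Icc 1 t, v i = u i + i) ∧
  (Finset.Icc 1 t).val.bind (fun i => ({u i, v i} : Multiset ℕ)) =
    ((Finset.Icc 1 (2 * t + 1)).erase (2 * t)).val

/-- A hooked Skolem sequence of order `t` exists only if `t ≡ 2` or `3 (mod 4)`. -/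
theorem stmt_3 (t : ℕ) (u v : ℕ → ℕ) (h : IsHookedSkolem t u v) :
    t % 4 = 2 ∨ t % 4 = 3 := by
  obtain ⟨hv, hp⟩ := h
  rcases Nat.eq_zero_or_pos t with rfl | ht
  · exfalso
    have h1 : (1:ℕ) ∈ ((Finset.Icc 1 1).erase 0).val := by
      rw [← Finset.mem_def]; simp
    rw [← hp, show (Finset.Icc 1 0) = ∅ by simp] at h1
    simp at h1
  -- sum both sides
  have hsum := congrArg Multiset.sum hp
  rw [Multiset.sum_bind] at hsum
  have hL : ((Finset.Icc 1 t).val.map fun i => ({u i, v i} : Multiset ℕ).sum).sum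
      = ∑ i ∈ Finset.Icc 1 t, (u i + v i) := by
    rw [Finset.sum_eq_multiset_sum]
    congr 1
  have hR : ((Finset.Icc 1 (2 * t + 1)).erase (2 * t)).val.sum
      = ∑ k ∈ (Finset.Icc 1 (2 * t + 1)).erase (2 * t), k := by
    rw [Finset.sum_eq_multiset_sum, Multiset.map_id']
  rw [hL, hR] at hsum
  have hmem : 2 * t ∈ Finset.Icc 1 (2 * t + 1) := by
    simp [Finset.mem_Icc]; omega
  have hR2 : (∑ k ∈ (Finset.Icc 1 (2 * t + 1)).erase (2 * t), k) + 2 * t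
      = ∑ k ∈ Finset.Icc 1 (2 * t + 1), k := Finset.sum_erase_add _ _ hmem
  have hgauss : ∀ n : ℕ, (∑ k ∈ Finset.Icc 1 n, k) * 2 = n * (n + 1) := by
    intro n
    induction n with
    | zero => simp
    | succ m ih =>
      rw [Finset.sum_Icc_succ_top (by omega)]
      nlinarith [ih]
  have hL2 : (∑ i ∈ Finset.Icc 1 t, (u i + v i))
      = 2 * (∑ i ∈ Finset.Icc 1 t, u i) + ∑ i ∈ Finset.Icc 1 t, i := by
    rw [Finset.sum_congr rfl (fun i hi => by rw [hv i hi])]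
    rw [Finset.sum_add_distrib, Finset.sum_add_distrib]
    ring
  rw [hL2] at hsum
  set U := ∑ i ∈ Finset.Icc 1 t, u i with hU
  set S := ∑ i ∈ Finset.Icc 1 t, i with hS
  have h1 : S * 2 = t * (t + 1) := hgauss t
  have h2 := hgauss (2 * t + 1)
  -- hsum : 2 * U + S = ∑ erase, h2 relates total
  obtain ⟨q, r, hqr, hr⟩ : ∃ q r, t = 4 * q + r ∧ r < 4 := ⟨t / 4, t % 4, by omega, by omega⟩
  have hrmod : t % 4 = r := by omega
  rw [hrmod]
  subst hqr
  have f1 : S * 2 = 16 * (q * q) + 8 * (q * r) + r * r + 4 * q + r := h1.trans (by ring)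
  have f2 : (∑ k ∈ Finset.Icc 1 (2 * (4 * q + r) + 1), k) * 2
      = 64 * (q * q) + 32 * (q * r) + 4 * (r * r) + 24 * q + 6 * r + 2 := h2.trans (by ring)
  interval_cases r <;> omega
end

section
/- For every s ≥ 1, the collection of pairs (r, 4s-r+2) for r = 1,...,2s; (4s+r+3, 8s-r+4) for r = 1,...,s-1; (5s+r+2, 7s-r+3) for r = 1,...,s-1; together with (2s+1, 6s+2), (4s+2, 6s+3), (4s+3, 8s+5), and (7s+3, 7s+4), forms a hooked Skolem sequence of order t = 4s+2, i.e., the differences v-u over all pairs are exactly {1,2,...,4s+2} and the entries partition {1,...,8s+5} \ {8s+4}. -/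
lemma bind_pair (m : Multiset ℕ) (f g : ℕ → ℕ) :
    m.bind (fun r => ({f r, g r} : Multiset ℕ)) = m.map f + m.map g := by
  induction m using Multiset.induction with
  | empty => simp
  | cons a m ih =>
    rw [Multiset.cons_bind, Multiset.map_cons, Multiset.map_cons, ih,
      Multiset.insert_eq_cons, Multiset.cons_add, Multiset.singleton_add,
      Multiset.cons_add, Multiset.add_cons]

lemma nodup_map_Icc (a b : ℕ) (f : ℕ → ℕ)
    (h : ∀ x y, a ≤ x → x ≤ b → a ≤ y → y ≤ b → f x = f y → x = y) :
    ((Finset.Icc a b).val.map f).Nodup := by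
  refine Multiset.Nodup.map_on ?_ (Finset.Icc a b).nodup
  simp only [Finset.mem_val, Finset.mem_Icc]
  exact fun x hx y hy => h x y hx.1 hx.2 hy.1 hy.2

lemma disj_maps (f g : ℕ → ℕ) (I J : Multiset ℕ)
    (h : ∀ x ∈ I, ∀ y ∈ J, f x ≠ g y) : Disjoint (I.map f) (J.map g) := by
  rw [Multiset.disjoint_left]
  intro a ha hb
  obtain ⟨x, hx, rfl⟩ := Multiset.mem_map.mp ha
  obtain ⟨y, hy, hxy⟩ := Multiset.mem_map.mp hb
  exact h x hx y hy hxy.symm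

lemma disj_map_lit (f : ℕ → ℕ) (I L : Multiset ℕ)
    (h : ∀ x ∈ I, f x ∉ L) : Disjoint (I.map f) L := by
  rw [Multiset.disjoint_left]
  intro a ha hl
  obtain ⟨x, hx, rfl⟩ := Multiset.mem_map.mp ha
  exact h x hx hl



/-- A hooked Skolem sequence of order `t`, given as a multiset of pairs: the differences
`p.2 - p.1` are exactly `1, ..., t` (each once), and the entries partition
`{1, ..., 2t+1} \ {2t}`. -/
def IsHookedSkolemPairs (t : ℕ) (P : Multiset (ℕ × ℕ)) : Prop :=
  P.map (fun p => p.2 - p.1) = (Finset.Icc 1 t).val ∧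
  P.bind (fun p => ({p.1, p.2} : Multiset ℕ)) =
    ((Finset.Icc 1 (2 * t + 1)).erase (2 * t)).val

/-- For every `s ≥ 1`, the listed pairs form a hooked Skolem sequence of order `4s+2`. -/
theorem stmt_6 (s : ℕ) (hs : 1 ≤ s) :
    IsHookedSkolemPairs (4 * s + 2)
      (((Finset.Icc 1 (2 * s)).val.map fun r => (r, 4 * s - r + 2)) +
       ((Finset.Icc 1 (s - 1)).val.map fun r => (4 * s + r + 3, 8 * s - r + 4)) +
       ((Finset.Icc 1 (s - 1)).val.map fun r => (5 * s + r + 2, 7 * s - r + 3)) +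
       ({(2 * s + 1, 6 * s + 2), (4 * s + 2, 6 * s + 3),
         (4 * s + 3, 8 * s + 5), (7 * s + 3, 7 * s + 4)} : Multiset (ℕ × ℕ))) := by
  constructor
  ·
      simp only [Multiset.map_add, Multiset.map_map, Function.comp_def,
        Multiset.insert_eq_cons, Multiset.map_cons, Multiset.map_singleton]
      have hN : (((Finset.Icc 1 (2 * s)).val.map fun r => 4 * s - r + 2 - r) +
          ((Finset.Icc 1 (s - 1)).val.map fun r => 8 * s - r + 4 - (4 * s + r + 3)) +
          ((Finset.Icc 1 (s - 1)).val.map fun r => 7 * s - r + 3 - (5 * s + r + 2)) +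
          ((6*s+2 - (2*s+1)) ::ₘ (6*s+3-(4*s+2)) ::ₘ (8*s+5-(4*s+3)) ::ₘ {7*s+4-(7*s+3)})).Nodup := by
        rw [Multiset.nodup_add, Multiset.nodup_add, Multiset.nodup_add]
        refine ⟨⟨⟨?_, ?_, ?_⟩, ?_, ?_⟩, ?_, ?_⟩
        · refine Multiset.Nodup.map_on ?_ (Finset.Icc 1 (2*s)).nodup
          simp only [Finset.mem_val, Finset.mem_Icc]; intros; omega
        · refine Multiset.Nodup.map_on ?_ (Finset.Icc 1 (s-1)).nodup
          simp only [Finset.mem_val, Finset.mem_Icc]; intros; omega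
        · rw [Multiset.disjoint_left]
          simp only [Multiset.mem_map, Finset.mem_val, Finset.mem_Icc, not_exists]
          rintro x ⟨r, hr, rfl⟩ q hq; omega
        · refine Multiset.Nodup.map_on ?_ (Finset.Icc 1 (s-1)).nodup
          simp only [Finset.mem_val, Finset.mem_Icc]; intros; omega
        · rw [Multiset.disjoint_left]
          simp only [Multiset.mem_add, Multiset.mem_map, Finset.mem_val, Finset.mem_Icc, not_exists]
          rintro x (⟨r, hr, rfl⟩ | ⟨r, hr, rfl⟩) q hq; omega; omega
        · simp only [Multiset.nodup_cons, Multiset.mem_cons, Multiset.mem_singleton,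
            Multiset.nodup_singleton, and_true, not_or]
          omega
        · rw [Multiset.disjoint_left]
          simp only [Multiset.mem_add, Multiset.mem_map, Finset.mem_val, Finset.mem_Icc,
            Multiset.mem_cons, Multiset.mem_singleton, not_or]
          rintro x ((⟨r, hr, rfl⟩ | ⟨r, hr, rfl⟩) | ⟨r, hr, rfl⟩) <;> omega
      rw [Multiset.Nodup.ext hN (Finset.Icc 1 (4*s+2)).nodup]
      intro a
      simp only [Multiset.mem_add, Multiset.mem_map, Finset.mem_val, Finset.mem_Icc,
        Multiset.mem_cons, Multiset.mem_singleton]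
      constructor
      · rintro (((⟨r, hr, rfl⟩ | ⟨r, hr, rfl⟩) | ⟨r, hr, rfl⟩) | (rfl|rfl|rfl|rfl))
        · omega
        · omega
        · omega
        · omega
        · omega
        · omega
        · omega
      · rintro ⟨h1, h2⟩
        obtain ⟨k, hk | hk⟩ := Nat.even_or_odd' a
        · by_cases h3 : a = 4*s+2
          · right; omega
          · exact Or.inl (Or.inl (Or.inl ⟨2*s+1-k, by omega, by omega⟩))
        · by_cases h3 : a = 1
          · right; omega
          by_cases h4 : a = 2*s+1
          · right; omega
          by_cases h5 : a = 4*s+1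
          · right; omega
          by_cases h6 : a ≤ 2*s-1
          · exact Or.inl (Or.inr ⟨s-k, by omega, by omega⟩)
          · exact Or.inl (Or.inl (Or.inr ⟨2*s-k, by omega, by omega⟩))
  ·
      rw [Multiset.add_bind, Multiset.add_bind, Multiset.add_bind,
        Multiset.bind_map, Multiset.bind_map, Multiset.bind_map]
      show ((Finset.Icc 1 (2*s)).val.bind fun r => ({r, 4*s-r+2} : Multiset ℕ)) + _ + _ + _ = _
      rw [bind_pair, bind_pair (f := fun r => 4*s+r+3) (g := fun r => 8*s-r+4),
        bind_pair (f := fun r => 5*s+r+2) (g := fun r => 7*s-r+3)]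
      simp only [Multiset.insert_eq_cons, Multiset.cons_bind, Multiset.singleton_bind]
      simp only [Multiset.cons_add, Multiset.singleton_add]
      have hN : (Multiset.map (fun r => r) (Finset.Icc 1 (2 * s)).val +
                Multiset.map (fun r => 4 * s - r + 2) (Finset.Icc 1 (2 * s)).val +
              (Multiset.map (fun r => 4 * s + r + 3) (Finset.Icc 1 (s - 1)).val +
                Multiset.map (fun r => 8 * s - r + 4) (Finset.Icc 1 (s - 1)).val) +
            (Multiset.map (fun r => 5 * s + r + 2) (Finset.Icc 1 (s - 1)).val +
              Multiset.map (fun r => 7 * s - r + 3) (Finset.Icc 1 (s - 1)).val) +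
          ((2 * s + 1) ::ₘ (6 * s + 2) ::ₘ (4 * s + 2) ::ₘ (6 * s + 3) ::ₘ (4 * s + 3) ::ₘ
            (8 * s + 5) ::ₘ (7 * s + 3) ::ₘ {7 * s + 4})).Nodup := by
        simp only [Multiset.nodup_add, Multiset.disjoint_add_left, Multiset.disjoint_add_right]
        repeat' apply And.intro
        all_goals first
          | (refine nodup_map_Icc _ _ _ ?_; intros; omega)
          | (refine disj_maps _ _ _ _ ?_;
             simp only [Finset.mem_val, Finset.mem_Icc]; intros; omega)
          | (refine disj_map_lit _ _ _ ?_;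
             simp only [Finset.mem_val, Finset.mem_Icc, Multiset.mem_cons, Multiset.mem_singleton,
               not_or];
             intros; omega)
          | (simp only [Multiset.nodup_cons, Multiset.mem_cons, Multiset.mem_singleton,
              Multiset.nodup_singleton, not_or, and_true]; omega)
      rw [Multiset.Nodup.ext hN (Finset.nodup _)]
      intro a
      simp only [Multiset.mem_add, Multiset.mem_map, Finset.mem_val, Finset.mem_Icc,
        Multiset.mem_cons, Multiset.mem_singleton, Finset.mem_erase]
      constructor
      · rintro (((⟨r, hr, rfl⟩ | ⟨r, hr, rfl⟩) | (⟨r, hr, rfl⟩ | ⟨r, hr, rfl⟩)) |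
          (⟨r, hr, rfl⟩ | ⟨r, hr, rfl⟩) | (rfl|rfl|rfl|rfl|rfl|rfl|rfl|rfl)) <;> omega
      · rintro ⟨hne, h1, h2⟩
        by_cases c1 : a ≤ 2*s
        · exact Or.inl (Or.inl (Or.inl (Or.inl ⟨a, by omega, by omega⟩)))
        by_cases c2 : a = 2*s+1
        · right; omega
        by_cases c3 : a ≤ 4*s+1
        · exact Or.inl (Or.inl (Or.inl (Or.inr ⟨4*s+2-a, by omega, by omega⟩)))
        by_cases c4 : a ≤ 4*s+3
        · right; omega
        by_cases c5 : a ≤ 5*s+2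
        · exact Or.inl (Or.inl (Or.inr (Or.inl ⟨a-4*s-3, by omega, by omega⟩)))
        by_cases c6 : a ≤ 6*s+1
        · exact Or.inl (Or.inr (Or.inl ⟨a-5*s-2, by omega, by omega⟩))
        by_cases c7 : a ≤ 6*s+3
        · right; omega
        by_cases c8 : a ≤ 7*s+2
        · exact Or.inl (Or.inr (Or.inr ⟨7*s+3-a, by omega, by omega⟩))
        by_cases c9 : a ≤ 7*s+4
        · right; omega
        by_cases c10 : a ≤ 8*s+3
        · exact Or.inl (Or.inl (Or.inr (Or.inr ⟨8*s+4-a, by omega, by omega⟩)))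
        · right; omega
end

section
/- For every s ≥ 2, the collection of pairs (4s+r, 8s-r-2) for r = 1,...,2s-2; (r, 4s-r-1) for r = 1,...,s-2; (s+r+1, 3s-r) for r = 1,...,s-2; together with (s-1, 3s), (s, s+1), (2s, 4s-1), (2s+1, 6s-1), and (4s, 8s-1), forms a hooked Skolem sequence of order t = 4s-1. -/
set_option maxHeartbeats 1600000

private lemma Icc_glue (a b b' c : ℕ) (h1 : a ≤ b') (h2 : b' = b + 1) (h3 : b ≤ c) :
    (Finset.Icc a b).val + (Finset.Icc b' c).val = (Finset.Icc a c).val := by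
  subst h2
  have hd : Disjoint (Finset.Icc a b) (Finset.Icc (b + 1) c) := by
    simp only [Finset.disjoint_left, Finset.mem_Icc]
    intro x hx
    omega
  have he : (Finset.Icc a b).disjUnion (Finset.Icc (b + 1) c) hd = Finset.Icc a c := by
    ext x
    simp only [Finset.mem_disjUnion, Finset.mem_Icc]
    omega
  rw [← he]
  rfl

private lemma Icc_sv (x : ℕ) : (Finset.Icc x x).val = ({x} : Multiset ℕ) := by
  rw [Finset.Icc_self, Finset.singleton_val]

private lemma map_add_Icc (c a b a' b' : ℕ) (ha' : a' = c + a) (hb' : b' = c + b) :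
    (Finset.Icc a b).val.map (fun r => c + r) = (Finset.Icc a' b').val := by
  subst ha' hb'
  have h : Finset.image (fun r => c + r) (Finset.Icc a b) = Finset.Icc (c + a) (c + b) := by
    ext x
    simp only [Finset.mem_image, Finset.mem_Icc]
    constructor
    · rintro ⟨r, ⟨h1, h2⟩, rfl⟩; omega
    · intro hx; exact ⟨x - c, by omega, by omega⟩
  rw [← h, Finset.image_val_of_injOn]
  intro r hr r' hr' hrr'
  simp only [Finset.coe_Icc, Set.mem_Icc] at hr hr'
  dsimp only at hrr'
  omega

private lemma map_sub_Icc (m a b a' b' : ℕ) (ha : a ≤ b + 1) (hb : b + 1 ≤ m)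
    (ha' : a' = m - b) (hb' : b' = m - a) :
    (Finset.Icc a b).val.map (fun r => m - r) = (Finset.Icc a' b').val := by
  subst ha' hb'
  have h : Finset.image (fun r => m - r) (Finset.Icc a b) = Finset.Icc (m - b) (m - a) := by
    ext x
    simp only [Finset.mem_image, Finset.mem_Icc]
    constructor
    · rintro ⟨r, ⟨h1, h2⟩, rfl⟩; omega
    · intro hx; exact ⟨m - x, by omega, by omega⟩
  rw [← h, Finset.image_val_of_injOn]
  intro r hr r' hr' hrr'
  simp only [Finset.coe_Icc, Set.mem_Icc] at hr hr'
  dsimp only at hrr'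
  omega

private lemma bind_pair_s7 (Q : Multiset ℕ) (f g : ℕ → ℕ) :
    (Q.map (fun r => (f r, g r))).bind (fun p => ({p.1, p.2} : Multiset ℕ)) =
      Q.map f + Q.map g := by
  induction Q using Multiset.induction with
  | empty => simp
  | cons a s ih =>
    rw [Multiset.map_cons, Multiset.cons_bind, ih, Multiset.map_cons, Multiset.map_cons]
    dsimp only
    simp only [Multiset.insert_eq_cons, ← Multiset.singleton_add]
    abel

private lemma parity_Icc (n : ℕ) :
    (Finset.Icc 1 (2 * n + 1)).val =
      (Finset.Icc 0 n).val.map (fun k => 2 * k + 1) +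
      (Finset.Icc 1 n).val.map (fun k => 2 * k) := by
  induction n with
  | zero => decide
  | succ n ih =>
    have g1 : (Finset.Icc 1 (2 * n + 1)).val + (Finset.Icc (2 * n + 2) (2 * n + 2)).val =
        (Finset.Icc 1 (2 * n + 2)).val := Icc_glue _ _ _ _ (by omega) (by omega) (by omega)
    have g2 : (Finset.Icc 1 (2 * n + 2)).val + (Finset.Icc (2 * n + 3) (2 * n + 3)).val =
        (Finset.Icc 1 (2 * n + 3)).val := Icc_glue _ _ _ _ (by omega) (by omega) (by omega)
    have g3 : (Finset.Icc 0 n).val + (Finset.Icc (n + 1) (n + 1)).val =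
        (Finset.Icc 0 (n + 1)).val := Icc_glue _ _ _ _ (by omega) (by omega) (by omega)
    have g4 : (Finset.Icc 1 n).val + (Finset.Icc (n + 1) (n + 1)).val =
        (Finset.Icc 1 (n + 1)).val := Icc_glue _ _ _ _ (by omega) (by omega) (by omega)
    have e0 : 2 * (n + 1) + 1 = 2 * n + 3 := by omega
    rw [e0, ← g2, ← g1, ih, ← g3, ← g4]
    simp only [Multiset.map_add, Icc_sv, Multiset.map_singleton]
    rw [show 2 * (n + 1) + 1 = 2 * n + 3 from by omega, show 2 * (n + 1) = 2 * n + 2 from by omega]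
    abel

/-- For every `s ≥ 2`, the listed pairs form a hooked Skolem sequence of order `4s-1`. -/
theorem stmt_7 (s : ℕ) (hs : 2 ≤ s) :
    IsHookedSkolemPairs (4 * s - 1)
      (((Finset.Icc 1 (2 * s - 2)).val.map fun r => (4 * s + r, 8 * s - r - 2)) +
       ((Finset.Icc 1 (s - 2)).val.map fun r => (r, 4 * s - r - 1)) +
       ((Finset.Icc 1 (s - 2)).val.map fun r => (s + r + 1, 3 * s - r)) +
       ({(s - 1, 3 * s), (s, s + 1), (2 * s, 4 * s - 1),
         (2 * s + 1, 6 * s - 1), (4 * s, 8 * s - 1)} : Multiset (ℕ × ℕ))) := by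
  refine ⟨?_, ?_⟩
  · -- differences
    have hA : Multiset.map (fun p : ℕ × ℕ => p.2 - p.1)
        ((Finset.Icc 1 (2 * s - 2)).val.map fun r => (4 * s + r, 8 * s - r - 2)) =
        Multiset.map (fun k => 2 * k) (Finset.Icc 1 (2 * s - 2)).val := by
      rw [Multiset.map_map]
      conv_rhs => rw [← map_sub_Icc (2 * s - 1) 1 (2 * s - 2) 1 (2 * s - 2)
        (by omega) (by omega) (by omega) (by omega)]
      rw [Multiset.map_map]
      refine Multiset.map_congr rfl fun r hr => ?_
      simp only [Finset.mem_val, Finset.mem_Icc] at hr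
      simp only [Function.comp_apply]
      omega
    have hB : Multiset.map (fun p : ℕ × ℕ => p.2 - p.1)
        ((Finset.Icc 1 (s - 2)).val.map fun r => (r, 4 * s - r - 1)) =
        Multiset.map (fun k => 2 * k + 1) (Finset.Icc (s + 1) (2 * s - 2)).val := by
      rw [Multiset.map_map]
      conv_rhs => rw [← map_sub_Icc (2 * s - 1) 1 (s - 2) (s + 1) (2 * s - 2)
        (by omega) (by omega) (by omega) (by omega)]
      rw [Multiset.map_map]
      refine Multiset.map_congr rfl fun r hr => ?_
      simp only [Finset.mem_val, Finset.mem_Icc] at hr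
      simp only [Function.comp_apply]
      omega
    have hC : Multiset.map (fun p : ℕ × ℕ => p.2 - p.1)
        ((Finset.Icc 1 (s - 2)).val.map fun r => (s + r + 1, 3 * s - r)) =
        Multiset.map (fun k => 2 * k + 1) (Finset.Icc 1 (s - 2)).val := by
      rw [Multiset.map_map]
      conv_rhs => rw [← map_sub_Icc (s - 1) 1 (s - 2) 1 (s - 2)
        (by omega) (by omega) (by omega) (by omega)]
      rw [Multiset.map_map]
      refine Multiset.map_congr rfl fun r hr => ?_
      simp only [Finset.mem_val, Finset.mem_Icc] at hr
      simp only [Function.comp_apply]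
      omega
    have hE : Multiset.map (fun p : ℕ × ℕ => p.2 - p.1)
        ({(s - 1, 3 * s), (s, s + 1), (2 * s, 4 * s - 1),
          (2 * s + 1, 6 * s - 1), (4 * s, 8 * s - 1)} : Multiset (ℕ × ℕ)) =
        ({2 * s + 1} : Multiset ℕ) + ({1} + ({2 * s - 1} + ({4 * s - 2} + {4 * s - 1}))) := by
      simp only [Multiset.insert_eq_cons, Multiset.map_cons, Multiset.map_singleton]
      try dsimp only
      rw [show 3 * s - (s - 1) = 2 * s + 1 from by omega,
        show s + 1 - s = 1 from by omega,
        show 4 * s - 1 - 2 * s = 2 * s - 1 from by omega,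
        show 6 * s - 1 - (2 * s + 1) = 4 * s - 2 from by omega,
        show 8 * s - 1 - 4 * s = 4 * s - 1 from by omega]
      simp only [← Multiset.singleton_add]
    have o1 : (Finset.Icc 0 0).val + (Finset.Icc 1 (s - 2)).val = (Finset.Icc 0 (s - 2)).val :=
      Icc_glue _ _ _ _ (by omega) (by omega) (by omega)
    have o2 : (Finset.Icc 0 (s - 2)).val + (Finset.Icc (s - 1) (s - 1)).val =
        (Finset.Icc 0 (s - 1)).val := Icc_glue _ _ _ _ (by omega) (by omega) (by omega)
    have o3 : (Finset.Icc 0 (s - 1)).val + (Finset.Icc s s).val = (Finset.Icc 0 s).val :=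
      Icc_glue _ _ _ _ (by omega) (by omega) (by omega)
    have o4 : (Finset.Icc 0 s).val + (Finset.Icc (s + 1) (2 * s - 2)).val =
        (Finset.Icc 0 (2 * s - 2)).val := Icc_glue _ _ _ _ (by omega) (by omega) (by omega)
    have o5 : (Finset.Icc 0 (2 * s - 2)).val + (Finset.Icc (2 * s - 1) (2 * s - 1)).val =
        (Finset.Icc 0 (2 * s - 1)).val := Icc_glue _ _ _ _ (by omega) (by omega) (by omega)
    have ev : (Finset.Icc 1 (2 * s - 2)).val + (Finset.Icc (2 * s - 1) (2 * s - 1)).val =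
        (Finset.Icc 1 (2 * s - 1)).val := Icc_glue _ _ _ _ (by omega) (by omega) (by omega)
    have hIcc : Finset.Icc 1 (4 * s - 1) = Finset.Icc 1 (2 * (2 * s - 1) + 1) :=
      congrArg (Finset.Icc 1) (by omega)
    simp only [Multiset.map_add]
    rw [hA, hB, hC, hE, hIcc, parity_Icc (2 * s - 1), ← o5, ← o4, ← o3, ← o2, ← o1, ← ev]
    simp only [Multiset.map_add, Icc_sv, Multiset.map_singleton]
    rw [show 2 * (s - 1) + 1 = 2 * s - 1 from by omega,
      show 2 * (2 * s - 1) + 1 = 4 * s - 1 from by omega,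
      show 2 * (2 * s - 1) = 4 * s - 2 from by omega]
    abel
  · -- entries
    rw [Multiset.add_bind, Multiset.add_bind, Multiset.add_bind,
      bind_pair_s7 _ (fun r => 4 * s + r) (fun r => 8 * s - r - 2),
      bind_pair_s7 _ (fun r => r) (fun r => 4 * s - r - 1),
      bind_pair_s7 _ (fun r => s + r + 1) (fun r => 3 * s - r)]
    have hA1 : Multiset.map (fun r => 4 * s + r) (Finset.Icc 1 (2 * s - 2)).val =
        (Finset.Icc (4 * s + 1) (6 * s - 2)).val :=
      map_add_Icc (4 * s) 1 (2 * s - 2) _ _ rfl (by omega)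
    have hA2 : Multiset.map (fun r => 8 * s - r - 2) (Finset.Icc 1 (2 * s - 2)).val =
        (Finset.Icc (6 * s) (8 * s - 3)).val := by
      rw [Multiset.map_congr rfl (fun r _ => by omega :
        ∀ r ∈ (Finset.Icc 1 (2 * s - 2)).val, 8 * s - r - 2 = 8 * s - 2 - r)]
      exact map_sub_Icc (8 * s - 2) 1 (2 * s - 2) (6 * s) (8 * s - 3)
        (by omega) (by omega) (by omega) (by omega)
    have hB1 : Multiset.map (fun r => r) (Finset.Icc 1 (s - 2)).val =
        (Finset.Icc 1 (s - 2)).val := Multiset.map_id' _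
    have hB2 : Multiset.map (fun r => 4 * s - r - 1) (Finset.Icc 1 (s - 2)).val =
        (Finset.Icc (3 * s + 1) (4 * s - 2)).val := by
      rw [Multiset.map_congr rfl (fun r _ => by omega :
        ∀ r ∈ (Finset.Icc 1 (s - 2)).val, 4 * s - r - 1 = 4 * s - 1 - r)]
      exact map_sub_Icc (4 * s - 1) 1 (s - 2) (3 * s + 1) (4 * s - 2)
        (by omega) (by omega) (by omega) (by omega)
    have hC1 : Multiset.map (fun r => s + r + 1) (Finset.Icc 1 (s - 2)).val =
        (Finset.Icc (s + 2) (2 * s - 1)).val := by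
      rw [Multiset.map_congr rfl (fun r _ => by omega :
        ∀ r ∈ (Finset.Icc 1 (s - 2)).val, s + r + 1 = (s + 1) + r)]
      exact map_add_Icc (s + 1) 1 (s - 2) (s + 2) (2 * s - 1) (by omega) (by omega)
    have hC2 : Multiset.map (fun r => 3 * s - r) (Finset.Icc 1 (s - 2)).val =
        (Finset.Icc (2 * s + 2) (3 * s - 1)).val :=
      map_sub_Icc (3 * s) 1 (s - 2) (2 * s + 2) (3 * s - 1)
        (by omega) (by omega) (by omega) (by omega)
    have hE : (({(s - 1, 3 * s), (s, s + 1), (2 * s, 4 * s - 1),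
          (2 * s + 1, 6 * s - 1), (4 * s, 8 * s - 1)} : Multiset (ℕ × ℕ)).bind
          (fun p => ({p.1, p.2} : Multiset ℕ))) =
        ({s - 1} : Multiset ℕ) + {3 * s} + {s} + {s + 1} + {2 * s} + {4 * s - 1} +
          {2 * s + 1} + {6 * s - 1} + {4 * s} + {8 * s - 1} := by
      simp only [Multiset.insert_eq_cons, Multiset.cons_bind, Multiset.singleton_bind]
      try dsimp only
      simp only [Multiset.insert_eq_cons, ← Multiset.singleton_add]
      abel
    -- glue chain for the entries
    have k1 : (Finset.Icc 1 (s - 2)).val + (Finset.Icc (s - 1) (s - 1)).val =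
        (Finset.Icc 1 (s - 1)).val := Icc_glue _ _ _ _ (by omega) (by omega) (by omega)
    have k2 : (Finset.Icc 1 (s - 1)).val + (Finset.Icc s s).val = (Finset.Icc 1 s).val :=
      Icc_glue _ _ _ _ (by omega) (by omega) (by omega)
    have k3 : (Finset.Icc 1 s).val + (Finset.Icc (s + 1) (s + 1)).val =
        (Finset.Icc 1 (s + 1)).val := Icc_glue _ _ _ _ (by omega) (by omega) (by omega)
    have k4 : (Finset.Icc 1 (s + 1)).val + (Finset.Icc (s + 2) (2 * s - 1)).val =
        (Finset.Icc 1 (2 * s - 1)).val := Icc_glue _ _ _ _ (by omega) (by omega) (by omega)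
    have k5 : (Finset.Icc 1 (2 * s - 1)).val + (Finset.Icc (2 * s) (2 * s)).val =
        (Finset.Icc 1 (2 * s)).val := Icc_glue _ _ _ _ (by omega) (by omega) (by omega)
    have k6 : (Finset.Icc 1 (2 * s)).val + (Finset.Icc (2 * s + 1) (2 * s + 1)).val =
        (Finset.Icc 1 (2 * s + 1)).val := Icc_glue _ _ _ _ (by omega) (by omega) (by omega)
    have k7 : (Finset.Icc 1 (2 * s + 1)).val + (Finset.Icc (2 * s + 2) (3 * s - 1)).val =
        (Finset.Icc 1 (3 * s - 1)).val := Icc_glue _ _ _ _ (by omega) (by omega) (by omega)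
    have k8 : (Finset.Icc 1 (3 * s - 1)).val + (Finset.Icc (3 * s) (3 * s)).val =
        (Finset.Icc 1 (3 * s)).val := Icc_glue _ _ _ _ (by omega) (by omega) (by omega)
    have k9 : (Finset.Icc 1 (3 * s)).val + (Finset.Icc (3 * s + 1) (4 * s - 2)).val =
        (Finset.Icc 1 (4 * s - 2)).val := Icc_glue _ _ _ _ (by omega) (by omega) (by omega)
    have k10 : (Finset.Icc 1 (4 * s - 2)).val + (Finset.Icc (4 * s - 1) (4 * s - 1)).val =
        (Finset.Icc 1 (4 * s - 1)).val := Icc_glue _ _ _ _ (by omega) (by omega) (by omega)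
    have k11 : (Finset.Icc 1 (4 * s - 1)).val + (Finset.Icc (4 * s) (4 * s)).val =
        (Finset.Icc 1 (4 * s)).val := Icc_glue _ _ _ _ (by omega) (by omega) (by omega)
    have k12 : (Finset.Icc 1 (4 * s)).val + (Finset.Icc (4 * s + 1) (6 * s - 2)).val =
        (Finset.Icc 1 (6 * s - 2)).val := Icc_glue _ _ _ _ (by omega) (by omega) (by omega)
    have k13 : (Finset.Icc 1 (6 * s - 2)).val + (Finset.Icc (6 * s - 1) (6 * s - 1)).val =
        (Finset.Icc 1 (6 * s - 1)).val := Icc_glue _ _ _ _ (by omega) (by omega) (by omega)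
    have k14 : (Finset.Icc 1 (6 * s - 1)).val + (Finset.Icc (6 * s) (8 * s - 3)).val =
        (Finset.Icc 1 (8 * s - 3)).val := Icc_glue _ _ _ _ (by omega) (by omega) (by omega)
    have main : (Finset.Icc 1 (s - 2)).val + (Finset.Icc (s - 1) (s - 1)).val +
        (Finset.Icc s s).val + (Finset.Icc (s + 1) (s + 1)).val +
        (Finset.Icc (s + 2) (2 * s - 1)).val + (Finset.Icc (2 * s) (2 * s)).val +
        (Finset.Icc (2 * s + 1) (2 * s + 1)).val + (Finset.Icc (2 * s + 2) (3 * s - 1)).val +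
        (Finset.Icc (3 * s) (3 * s)).val + (Finset.Icc (3 * s + 1) (4 * s - 2)).val +
        (Finset.Icc (4 * s - 1) (4 * s - 1)).val + (Finset.Icc (4 * s) (4 * s)).val +
        (Finset.Icc (4 * s + 1) (6 * s - 2)).val + (Finset.Icc (6 * s - 1) (6 * s - 1)).val +
        (Finset.Icc (6 * s) (8 * s - 3)).val =
        (Finset.Icc 1 (8 * s - 3)).val := by
      rw [k1, k2, k3, k4, k5, k6, k7, k8, k9, k10, k11, k12, k13, k14]
    have hErase : ((Finset.Icc 1 (2 * (4 * s - 1) + 1)).erase (2 * (4 * s - 1))).val =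
        (Finset.Icc 1 (8 * s - 3)).val + (Finset.Icc (8 * s - 1) (8 * s - 1)).val := by
      have m1 : (Finset.Icc 1 (8 * s - 3)).val + (Finset.Icc (8 * s - 2) (8 * s - 2)).val =
          (Finset.Icc 1 (8 * s - 2)).val := Icc_glue _ _ _ _ (by omega) (by omega) (by omega)
      have m2 : (Finset.Icc 1 (8 * s - 2)).val + (Finset.Icc (8 * s - 1) (8 * s - 1)).val =
          (Finset.Icc 1 (8 * s - 1)).val := Icc_glue _ _ _ _ (by omega) (by omega) (by omega)
      have m3 : Finset.Icc 1 (2 * (4 * s - 1) + 1) = Finset.Icc 1 (8 * s - 1) :=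
        congrArg (Finset.Icc 1) (by omega)
      have m4 : (2 : ℕ) * (4 * s - 1) = 8 * s - 2 := by omega
      rw [Finset.erase_val, m3, m4, ← m2, ← m1, Icc_sv (8 * s - 2), Icc_sv (8 * s - 1)]
      rw [show (Finset.Icc 1 (8 * s - 3)).val + ({8 * s - 2} : Multiset ℕ) + {8 * s - 1} =
        (8 * s - 2) ::ₘ ((Finset.Icc 1 (8 * s - 3)).val + {8 * s - 1}) from by
          rw [← Multiset.singleton_add (8 * s - 2)]; abel]
      rw [Multiset.erase_cons_head]
    rw [hA1, hA2, hB1, hB2, hC1, hC2, hE, hErase, ← main,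
      Icc_sv (s - 1), Icc_sv s, Icc_sv (s + 1), Icc_sv (2 * s), Icc_sv (2 * s + 1),
      Icc_sv (3 * s), Icc_sv (4 * s - 1), Icc_sv (4 * s), Icc_sv (6 * s - 1),
      Icc_sv (8 * s - 1)]
    abel
end

section
/- If (u_i, v_i), i = 1,...,t, is a hooked Skolem sequence of order t, then the triples B_i = {0, i, v_i + t}, i = 1,...,t, form a (6t+1, 3, 1) cyclic difference family over Z_{6t+1}. -/
/-- A `(v, k, 1)` cyclic difference family: `t` `k`-element subsets of `ZMod v` such that
every nonzero element of `ZMod v` occurs exactly once among the ordered differences of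
distinct elements within the subsets. -/
def IsCDF (v k t : ℕ) (B : ℕ → Finset (ZMod v)) : Prop :=
  (∀ i ∈ Finset.Icc 1 t, (B i).card = k) ∧
  ∀ d : ZMod v, d ≠ 0 →
    (∑ i ∈ Finset.Icc 1 t,
      (((B i) ×ˢ (B i)).filter (fun p => p.1 ≠ p.2 ∧ p.1 - p.2 = d)).card) = 1

/-!
The block `{0, a, b}` has differences `±a, ±b, ±(b - a)`; for `B i` these are `±i`, `±(v i + t)`
and `±(u i + t)`. As `i` runs over `1, ..., t`, the numbers `i, u i + t, v i + t` run exactly once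
through `{1, ..., 3t+1} \ {3t}`, and negation modulo `6t+1` turns this set into
`{3t, ..., 6t} \ {3t+1}`. The two sets together are `{1, ..., 6t}`, one representative of each
nonzero residue.
-/

open Finset

section Triple

variable {G : Type*} [AddCommGroup G] [DecidableEq G]

theorem card_filter_sub_eq_count_triple {a b : G} (ha : a ≠ 0) (hb : b ≠ 0) (hab : a ≠ b)
    (d : G) :
    (({0, a, b} ×ˢ {0, a, b} : Finset (G × G)).filter fun p => p.1 ≠ p.2 ∧ p.1 - p.2 = d).card =
      (({a, b - a, b} : Multiset G) + ({a, b - a, b} : Multiset G).map Neg.neg).count d := by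
  have h0 : (0 : G) ∉ ({a, b} : Finset G) := by simp [ha.symm, hb.symm]
  have h1 : a ∉ ({b} : Finset G) := by simpa using hab
  rw [card_filter, sum_product]
  simp only [sum_insert h0, sum_insert h1, sum_singleton, Multiset.insert_eq_cons,
    Multiset.map_cons, Multiset.map_singleton, Multiset.count_add, Multiset.count_cons,
    Multiset.count_singleton, ne_eq, not_true_eq_false, false_and, if_false, sub_zero, zero_sub,
    sub_self, ha, hb, hab, ha.symm, hb.symm, hab.symm, not_false_eq_true, true_and, neg_sub,
    eq_comm (a := d)]
  omega

end Triple

theorem Multiset.map_finsetSum {ι α β : Type*} (f : α → β) (s : Finset ι)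
    (g : ι → Multiset α) :
    (∑ i ∈ s, g i).map f = ∑ i ∈ s, (g i).map f :=
  map_sum (mapAddMonoidHom f) g s

theorem Nat.Icc_add_map_add_right_Icc_erase (t : ℕ) :
    (Icc 1 t).val + ((Icc 1 (2 * t + 1)).erase (2 * t)).val.map (· + t) =
      ((Icc 1 (3 * t + 1)).erase (3 * t)).val := by
  rw [← image_val_of_injOn (add_left_injective t).injOn, image_erase (add_left_injective t),
    image_add_right_Icc]
  ext k
  simp only [Multiset.count_add, Multiset.count_eq_of_nodup (Finset.nodup _), mem_val, mem_erase,
    mem_Icc]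
  split_ifs <;> omega

theorem Nat.Icc_erase_add_map_const_sub {n : ℕ} (hn : 0 < n) :
    ((Icc 1 (n + 1)).erase n).val + ((Icc 1 (n + 1)).erase n).val.map (2 * n + 1 - ·) =
      (Icc 1 (2 * n)).val := by
  have hinj : Set.InjOn (2 * n + 1 - ·) ((Icc 1 (n + 1)).erase n : Set ℕ) := by
    intro a ha b hb hab
    simp only [coe_erase, coe_Icc, Set.mem_sdiff, Set.mem_Icc] at ha hb
    simp only at hab
    omega
  have himage :
      ((Icc 1 (n + 1)).erase n).image (2 * n + 1 - ·) = (Icc n (2 * n)).erase (n + 1) := by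
    ext k
    simp only [mem_image, mem_erase, mem_Icc]
    constructor
    · rintro ⟨a, ha, rfl⟩
      omega
    · exact fun hk => ⟨2 * n + 1 - k, by omega, by omega⟩
  rw [← image_val_of_injOn hinj, himage]
  ext k
  simp only [Multiset.count_add, Multiset.count_eq_of_nodup (Finset.nodup _), mem_val, mem_erase,
    mem_Icc]
  split_ifs <;> omega

namespace ZMod

theorem natCast_injOn_Iio (N : ℕ) : Set.InjOn (Nat.cast : ℕ → ZMod N) (Set.Iio N) := by
  intro a ha b hb hab
  simpa [Nat.mod_eq_of_lt ha, Nat.mod_eq_of_lt hb] using (natCast_eq_natCast_iff' a b N).1 hab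

theorem map_natCast_add_map_neg (N : ℕ) (S : Multiset ℕ) (hS : ∀ n ∈ S, n ≤ N) :
    S.map (Nat.cast : ℕ → ZMod N) + (S.map (Nat.cast : ℕ → ZMod N)).map Neg.neg =
      (S + S.map (N - ·)).map Nat.cast := by
  rw [Multiset.map_add, Multiset.map_map, Multiset.map_map]
  congr 1
  refine Multiset.map_congr rfl fun n hn => ?_
  simp [Nat.cast_sub (hS n hn)]

theorem map_natCast_Icc (N : ℕ) :
    (Icc 1 N).val.map (Nat.cast : ℕ → ZMod (N + 1)) = (univ.erase 0).val := by
  have hinj : Set.InjOn (Nat.cast : ℕ → ZMod (N + 1)) (Icc 1 N) :=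
    (natCast_injOn_Iio _).mono fun n hn => Nat.lt_succ_of_le (mem_Icc.1 hn).2
  rw [← image_val_of_injOn hinj]
  congr 1
  ext x
  simp only [mem_image, mem_Icc, mem_erase, mem_univ, and_true]
  constructor
  · rintro ⟨n, hn, rfl⟩ h0
    have := natCast_injOn_Iio (N + 1) (Set.mem_Iio.2 (by omega)) (Set.mem_Iio.2 (by omega))
      (h0.trans Nat.cast_zero.symm)
    omega
  · intro hx
    refine ⟨x.val, ⟨?_, ?_⟩, natCast_zmod_val x⟩
    · exact Nat.pos_of_ne_zero ((val_ne_zero x).2 hx)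
    · exact Nat.lt_succ_iff.1 (val_lt x)

end ZMod

namespace IsHookedSkolem

variable {t : ℕ} {u v : ℕ → ℕ}

theorem pos (h : IsHookedSkolem t u v) : 0 < t :=
  Nat.pos_of_ne_zero <| by rintro rfl; simpa using h.2

theorem v_mem (h : IsHookedSkolem t u v) {i : ℕ} (hi : i ∈ Icc 1 t) :
    v i ∈ (Icc 1 (2 * t + 1)).erase (2 * t) := by
  rw [← mem_val, ← h.2, Multiset.mem_bind]
  exact ⟨i, hi, by simp⟩

theorem sum_triples (h : IsHookedSkolem t u v) :
    ∑ i ∈ Icc 1 t, ({i, u i + t, v i + t} : Multiset ℕ) =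
      ((Icc 1 (3 * t + 1)).erase (3 * t)).val := by
  have hsplit : ∀ i, ({i, u i + t, v i + t} : Multiset ℕ) =
      {i} + ({u i, v i} : Multiset ℕ).map (· + t) := fun i => rfl
  have hbind : (Icc 1 t).val.bind (fun i => ({u i, v i} : Multiset ℕ)) =
      ∑ i ∈ Icc 1 t, {u i, v i} := rfl
  rw [sum_congr rfl fun i _ => hsplit i, sum_add_distrib, sum_multiset_singleton,
    ← Nat.Icc_add_map_add_right_Icc_erase, ← h.2, hbind, Multiset.map_finsetSum]

theorem sum_block_differences (h : IsHookedSkolem t u v) :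
    ∑ i ∈ Icc 1 t,
      (({i, u i + t, v i + t} : Multiset ℕ).map (Nat.cast : ℕ → ZMod (6 * t + 1)) +
        (({i, u i + t, v i + t} : Multiset ℕ).map Nat.cast).map Neg.neg) =
      (univ.erase 0 : Finset (ZMod (6 * t + 1))).val := by
  have hle : ∀ n ∈ ((Icc 1 (3 * t + 1)).erase (3 * t)).val, n ≤ 6 * t + 1 := by
    intro n hn
    simp only [mem_val, mem_erase, mem_Icc] at hn
    omega
  have hconst_sub := Nat.Icc_erase_add_map_const_sub (n := 3 * t) (Nat.mul_pos three_pos h.pos)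
  rw [show 2 * (3 * t) = 6 * t by ring] at hconst_sub
  rw [sum_add_distrib, ← Multiset.map_finsetSum, ← Multiset.map_finsetSum,
    ← Multiset.map_finsetSum, h.sum_triples, ZMod.map_natCast_add_map_neg _ _ hle, hconst_sub,
    ZMod.map_natCast_Icc]

theorem block_pairwise_ne (h : IsHookedSkolem t u v) {i : ℕ} (hi : i ∈ Icc 1 t) :
    (i : ZMod (6 * t + 1)) ≠ 0 ∧ ((v i + t : ℕ) : ZMod (6 * t + 1)) ≠ 0 ∧
      (i : ZMod (6 * t + 1)) ≠ ((v i + t : ℕ) : ZMod (6 * t + 1)) := by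
  have hv := h.v_mem hi
  have hvu := h.1 i hi
  simp only [mem_erase, mem_Icc] at hi hv
  have hinj := ZMod.natCast_injOn_Iio (6 * t + 1)
  refine ⟨?_, ?_, hinj.ne (Set.mem_Iio.2 (by omega)) (Set.mem_Iio.2 (by omega)) (by omega)⟩ <;>
  · rw [← Nat.cast_zero]
    exact hinj.ne (Set.mem_Iio.2 (by omega)) (Set.mem_Iio.2 (by omega)) (by omega)

theorem card_filter_block (h : IsHookedSkolem t u v) {i : ℕ} (hi : i ∈ Icc 1 t)
    (d : ZMod (6 * t + 1)) :
    (({0, (i : ZMod (6 * t + 1)), ((v i + t : ℕ) : ZMod (6 * t + 1))} ×ˢ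
        {0, (i : ZMod (6 * t + 1)), ((v i + t : ℕ) : ZMod (6 * t + 1))} : Finset (_ × _)).filter
        fun p => p.1 ≠ p.2 ∧ p.1 - p.2 = d).card =
      (({i, u i + t, v i + t} : Multiset ℕ).map (Nat.cast : ℕ → ZMod (6 * t + 1)) +
        (({i, u i + t, v i + t} : Multiset ℕ).map Nat.cast).map Neg.neg).count d := by
  obtain ⟨ha, hb, hab⟩ := h.block_pairwise_ne hi
  have hsub : ((v i + t : ℕ) : ZMod (6 * t + 1)) - i = ((u i + t : ℕ) : ZMod (6 * t + 1)) := by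
    rw [sub_eq_iff_eq_add, ← Nat.cast_add, h.1 i hi]
    ring_nf
  rw [card_filter_sub_eq_count_triple ha hb hab, hsub]
  rfl

end IsHookedSkolem

/-- If `(u i, v i)`, `i = 1, ..., t`, is a hooked Skolem sequence of order `t`, then the
triples `B i = {0, i, v i + t}` form a `(6t+1, 3, 1)` cyclic difference family. -/
theorem stmt_8 (t : ℕ) (u v : ℕ → ℕ) (h : IsHookedSkolem t u v) :
    IsCDF (6 * t + 1) 3 t
      (fun i => ({0, (i : ZMod (6 * t + 1)), ((v i + t : ℕ) : ZMod (6 * t + 1))} :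
        Finset (ZMod (6 * t + 1)))) := by
  refine ⟨fun i hi => ?_, fun d hd => ?_⟩
  · obtain ⟨ha, hb, hab⟩ := h.block_pairwise_ne hi
    exact card_eq_three.2 ⟨0, _, _, ha.symm, hb.symm, hab, rfl⟩
  · rw [sum_congr rfl fun i hi => h.card_filter_block hi d, ← Multiset.count_sum',
      h.sum_block_differences]
    exact Multiset.count_eq_one_of_mem (nodup _) (mem_erase.2 ⟨hd, mem_univ d⟩)
end

section
/- Let (u_i, v_i), i = 1,...,L, be a hooked Skolem sequence of order L and set B_i = {0, i, v_i + L}. Then for every z ≥ 6L+3, all differences of distinct elements within each B_i, reduced modulo z, over all i = 1,...,L, are pairwise distinct. -/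
/-- The elements of the triple `B i = {0, i, v i + L}`, indexed by `j ∈ {1, 2, 3}`. -/
def tripleElem (L : ℕ) (v : ℕ → ℕ) (i j : ℕ) : ℕ :=
  if j = 1 then 0 else if j = 2 then i else v i + L

/-- The multiset of all differences of distinct elements within the triples
`B i = {0, i, v i + L}`, reduced modulo `z`, over `i = 1, ..., L`. -/
def tripleDiffsMod (L z : ℕ) (v : ℕ → ℕ) : Multiset (ZMod z) :=
  (Finset.Icc 1 L).val.bind fun i =>
    (((Finset.Icc 1 3) ×ˢ (Finset.Icc 1 3)).filter (fun p => p.1 ≠ p.2)).val.map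
      fun p => ((tripleElem L v i p.1 : ZMod z) - (tripleElem L v i p.2 : ZMod z))

/-- If `(u i, v i)` is a hooked Skolem sequence of order `L` and `B i = {0, i, v i + L}`,
then for every `z ≥ 6L+3` all the within-triple differences modulo `z` are pairwise
distinct. -/
theorem stmt_11 (L z : ℕ) (u v : ℕ → ℕ) (h : IsHookedSkolem L u v)
    (hz : 6 * L + 3 ≤ z) : (tripleDiffsMod L z v).Nodup := by
  obtain ⟨hv, hS⟩ := h
  haveI : NeZero z := ⟨by omega⟩
  set P : Multiset ℕ :=
    (Finset.Icc 1 L).val + (((Finset.Icc 1 (2 * L + 1)).erase (2 * L)).val.map (· + L)) with hP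
  have hPmem : ∀ a ∈ P, 1 ≤ a ∧ a ≤ 3 * L + 1 := by
    intro a ha
    rw [hP, Multiset.mem_add] at ha
    rcases ha with ha | ha
    · simp only [Finset.mem_val, Finset.mem_Icc] at ha; omega
    · rw [Multiset.mem_map] at ha
      obtain ⟨b, hb, rfl⟩ := ha
      simp only [Finset.mem_val, Finset.mem_erase, Finset.mem_Icc] at hb
      omega
  have hPnodup : P.Nodup := by
    rw [hP, Multiset.nodup_add]
    refine ⟨(Finset.Icc 1 L).nodup, Multiset.Nodup.map (fun a b hab => by omega)
      (((Finset.Icc 1 (2 * L + 1)).erase (2 * L)).nodup), ?_⟩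
    rw [Multiset.disjoint_left]
    intro a ha hb
    simp only [Finset.mem_val, Finset.mem_Icc] at ha
    rw [Multiset.mem_map] at hb
    obtain ⟨b, hb, rfl⟩ := hb
    simp only [Finset.mem_val, Finset.mem_erase, Finset.mem_Icc] at hb
    omega
  have hpairs : (((Finset.Icc 1 3) ×ˢ (Finset.Icc 1 3)).filter (fun p => p.1 ≠ p.2)).val =
      ({(1, 2), (1, 3), (2, 1), (2, 3), (3, 1), (3, 2)} : Multiset (ℕ × ℕ)) := by decide
  have hQ : (Finset.Icc 1 L).val.bind (fun i => ({i, u i + L, v i + L} : Multiset ℕ)) = P := by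
    have e : ∀ i, ({i, u i + L, v i + L} : Multiset ℕ) =
        ({i} : Multiset ℕ) + ({u i, v i} : Multiset ℕ).map (· + L) := by
      intro i
      simp only [Multiset.insert_eq_cons, Multiset.map_cons, Multiset.map_singleton,
        Multiset.singleton_add]
    rw [Multiset.bind_congr (fun i _ => e i), Multiset.bind_add, hP,
      Multiset.bind_singleton, Multiset.map_id', ← hS, Multiset.map_bind]
  have key : tripleDiffsMod L z v =
      P.map (fun d : ℕ => (d : ZMod z)) + P.map (fun d : ℕ => -(d : ZMod z)) := by
    rw [← hQ, Multiset.map_bind, Multiset.map_bind, ← Multiset.bind_add]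
    unfold tripleDiffsMod
    refine Multiset.bind_congr (fun i hi => ?_)
    rw [hpairs]
    have hvi : v i = u i + i := hv i hi
    simp only [Multiset.map_cons, Multiset.map_singleton, tripleElem, hvi]
    norm_num
    ring_nf
    ext a
    simp [Multiset.count_cons, Multiset.count_singleton]
    ring
  rw [key, Multiset.nodup_add]
  have hinj : ∀ a ∈ P, ∀ b ∈ P, (a : ZMod z) = (b : ZMod z) → a = b := by
    intro a ha b hb hab
    have h2 : a % z = b % z := (ZMod.natCast_eq_natCast_iff a b z).mp hab
    have ha' := hPmem a ha; have hb' := hPmem b hb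
    have : a % z = a := Nat.mod_eq_of_lt (by omega)
    have : b % z = b := Nat.mod_eq_of_lt (by omega)
    omega
  refine ⟨Multiset.Nodup.map_on hinj hPnodup,
    Multiset.Nodup.map_on (fun a ha b hb hab => hinj a ha b hb (neg_injective hab)) hPnodup, ?_⟩
  rw [Multiset.disjoint_left]
  intro x hx hx'
  rw [Multiset.mem_map] at hx hx'
  obtain ⟨a, ha, rfl⟩ := hx
  obtain ⟨b, hb, hba⟩ := hx'
  have h0 : ((a + b : ℕ) : ZMod z) = 0 := by push_cast; rw [← hba]; ring
  have hdvd : z ∣ a + b := (ZMod.natCast_eq_zero_iff _ _).mp h0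
  have ha' := hPmem a ha; have hb' := hPmem b hb
  have := Nat.le_of_dvd (by omega) hdvd
  omega
end

section
/- Let L ≡ 2 or 3 (mod 4) and z = 6L+2. There is no choice of integers s_{i1} < s_{i2} < s_{i3} in {0,...,z-1} for i = 1,...,L such that the 6L differences (s_{ij} - s_{ik}) mod z, for i = 1,...,L and j ≠ k, are pairwise distinct. -/
/-- The multiset of all differences of distinct shift values within each circulant,
reduced modulo `z`: for each `i = 1, ..., L`, the six differences
`s i j - s i k` (`j ≠ k`, `j, k ∈ {1, 2, 3}`). -/
def shiftDiffsMod (L z : ℕ) (s : ℕ → ℕ → ℕ) : Multiset (ZMod z) :=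
  (Finset.Icc 1 L).val.bind fun i =>
    (((Finset.Icc 1 3) ×ˢ (Finset.Icc 1 3)).filter (fun p => p.1 ≠ p.2)).val.map
      fun p => ((s i p.1 : ZMod z) - (s i p.2 : ZMod z))

/-! Reduce the differences modulo 2. Among the six differences of three residues `a, b, c`
either none or exactly four are odd, so the number of odd differences is divisible by 4.
On the other hand the differences are nonzero and closed under negation, so if they were
distinct they would fill `ZMod (2 * m)`, `m = 3 * L + 1`, except for `0` and the unique nonzero
element of order two, namely `m`. That set has `2 * (m / 2)` odd elements, which is
`≡ 2 (mod 4)` exactly when `L ≡ 2, 3 (mod 4)`. -/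

open Finset

lemma ZMod.natCast_ne_natCast_of_lt {a b n : ℕ} (hab : a < b) (hb : b < n) :
    (a : ZMod n) ≠ b := by
  rw [Ne, ZMod.natCast_eq_natCast_iff', Nat.mod_eq_of_lt (hab.trans hb), Nat.mod_eq_of_lt hb]
  exact hab.ne

section TripleDiffs

variable {R : Type*} [AddCommGroup R]

def tripleDiffs (a b c : R) : Multiset R := {a - b, a - c, b - a, b - c, c - a, c - b}

@[simp]
lemma card_tripleDiffs (a b c : R) : Multiset.card (tripleDiffs a b c) = 6 := rfl

lemma zero_notMem_tripleDiffs {a b c : R} (hab : a ≠ b) (hac : a ≠ c) (hbc : b ≠ c) :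
    0 ∉ tripleDiffs a b c := by
  simp [tripleDiffs, eq_comm (a := (0 : R)), sub_eq_zero, hab, hac, hbc, hab.symm, hac.symm,
    hbc.symm]

lemma neg_mem_tripleDiffs {a b c x : R} (hx : x ∈ tripleDiffs a b c) :
    -x ∈ tripleDiffs a b c := by
  simp only [tripleDiffs, Multiset.insert_eq_cons, Multiset.mem_cons,
    Multiset.mem_singleton] at hx ⊢
  rcases hx with rfl | rfl | rfl | rfl | rfl | rfl <;> simp

lemma map_tripleDiffs {S : Type*} [AddCommGroup S] (f : R →+ S) (a b c : R) :
    (tripleDiffs a b c).map f = tripleDiffs (f a) (f b) (f c) := by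
  simp [tripleDiffs]

lemma four_dvd_count_one_tripleDiffs (f : R →+ ZMod 2) (a b c : R) :
    4 ∣ ((tripleDiffs a b c).map f).count 1 := by
  rw [map_tripleDiffs]
  generalize f a = x, f b = y, f c = z
  revert x y z
  decide

end TripleDiffs

section FamilyDiffs

variable {ι R : Type*} [AddCommGroup R] (I : Finset ι) (a b c : ι → R)

def familyDiffs : Multiset R := I.val.bind fun i => tripleDiffs (a i) (b i) (c i)

lemma card_familyDiffs : Multiset.card (familyDiffs I a b c) = 6 * #I := by
  simp [familyDiffs, Multiset.card_bind, mul_comm]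

lemma zero_notMem_familyDiffs (h : ∀ i ∈ I, a i ≠ b i ∧ a i ≠ c i ∧ b i ≠ c i) :
    0 ∉ familyDiffs I a b c := by
  simp only [familyDiffs, Multiset.mem_bind, not_exists, not_and]
  intro i hi
  obtain ⟨hab, hac, hbc⟩ := h i hi
  exact zero_notMem_tripleDiffs hab hac hbc

lemma neg_mem_familyDiffs {x : R} (hx : x ∈ familyDiffs I a b c) :
    -x ∈ familyDiffs I a b c := by
  simp only [familyDiffs, Multiset.mem_bind] at hx ⊢
  obtain ⟨i, hi, hx⟩ := hx
  exact ⟨i, hi, neg_mem_tripleDiffs hx⟩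

lemma four_dvd_count_one_familyDiffs (f : R →+ ZMod 2) :
    4 ∣ ((familyDiffs I a b c).map f).count 1 := by
  rw [familyDiffs, Multiset.map_bind, Multiset.count_bind]
  exact Multiset.dvd_sum fun n hn => by
    obtain ⟨i, -, rfl⟩ := Multiset.mem_map.1 hn
    exact four_dvd_count_one_tripleDiffs f _ _ _

end FamilyDiffs

lemma shiftDiffsMod_eq_familyDiffs (L z : ℕ) (s : ℕ → ℕ → ℕ) :
    shiftDiffsMod L z s =
      familyDiffs (Icc 1 L) (fun i => (s i 1 : ZMod z)) (fun i => s i 2) (fun i => s i 3) := by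
  have hpairs : ((Icc 1 3) ×ˢ (Icc 1 3)).filter (fun p : ℕ × ℕ => p.1 ≠ p.2)
      = {(1, 2), (1, 3), (2, 1), (2, 3), (3, 1), (3, 2)} := by decide
  simp [shiftDiffsMod, familyDiffs, hpairs, tripleDiffs]

section HalfModulus

variable (m : ℕ) [NeZero m]

abbrev parity : ZMod (2 * m) →+* ZMod 2 := ZMod.castHom (dvd_mul_right 2 m) (ZMod 2)

lemma card_filter_parity_eq_one : #{x : ZMod (2 * m) | parity m x = 1} = m := by
  have hfibers : #{x : ZMod (2 * m) | parity m x = 0} = #{x | parity m x = 1} :=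
    AddMonoidHom.card_fiber_eq_of_mem_range (parity m).toAddMonoidHom
      (ZMod.castHom_surjective (dvd_mul_right 2 m) 0)
      (ZMod.castHom_surjective (dvd_mul_right 2 m) 1)
  have htotal := card_eq_sum_card_fiberwise (f := parity m) (s := univ) (t := univ)
    (fun _ _ => mem_univ _)
  rw [card_univ, ZMod.card, show (univ : Finset (ZMod 2)) = {0, 1} by decide,
    sum_pair zero_ne_one] at htotal
  omega

variable {m}

lemma eq_univ_sdiff_zero_half {S : Finset (ZMod (2 * m))} (h0 : 0 ∉ S)
    (hneg : ∀ x ∈ S, -x ∈ S) (hcard : #S + 2 = 2 * m) :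
    S = univ \ {0, (m : ZMod (2 * m))} := by
  have hmem : ∀ x, x ∈ univ \ insert 0 S ↔ x ≠ 0 ∧ x ∉ S := by simp
  obtain ⟨t, ht⟩ : ∃ t, univ \ insert 0 S = {t} := card_eq_one.mp <| by
    rw [card_univ_sdiff, card_insert_of_notMem h0, ZMod.card]; omega
  obtain ⟨ht0, htS⟩ := (hmem t).1 (ht ▸ mem_singleton_self t)
  have hnegt : -t = t := by
    have : -t ∈ univ \ insert 0 S :=
      (hmem _).2 ⟨neg_ne_zero.2 ht0, fun h => htS (neg_neg t ▸ hneg _ h)⟩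
    simpa [ht] using this
  obtain rfl : t = m := by
    rcases (ZMod.neg_eq_self_iff t).1 hnegt with h | h
    · exact absurd h ht0
    · rw [← ZMod.natCast_zmod_val t]; congr; omega
  refine eq_of_subset_of_card_le (fun x hx => ?_) ?_
  · simp only [mem_sdiff, mem_univ, mem_insert, mem_singleton, true_and, not_or]
    exact ⟨fun h => h0 (h ▸ hx), fun h => htS (h ▸ hx)⟩
  · rw [card_univ_sdiff, ZMod.card, card_pair_eq_two_iff.2 (Ne.symm ht0)]; omega

lemma card_filter_parity_univ_sdiff :
    #{x ∈ univ \ {0, (m : ZMod (2 * m))} | parity m x = 1} = 2 * (m / 2) := by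
  have hsplit (P : Finset (ZMod (2 * m))) :
      {x ∈ univ \ P | parity m x = 1} =
        ({x | parity m x = 1} : Finset _) \ {x ∈ P | parity m x = 1} := by
    ext x; simp only [mem_sdiff, mem_filter, mem_univ, true_and]; tauto
  have hpair : #{x ∈ ({0, (m : ZMod (2 * m))} : Finset _) | parity m x = 1} = m % 2 := by
    rw [filter_insert, if_neg (by simp), filter_singleton, map_natCast]
    split_ifs <;> simp_all [ZMod.natCast_eq_one_iff_odd, Nat.odd_iff]
  rw [hsplit, card_sdiff_of_subset (filter_subset_filter _ (subset_univ _)),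
    card_filter_parity_eq_one, hpair]
  omega

lemma count_one_map_parity_of_nodup {M : Multiset (ZMod (2 * m))} (hM : M.Nodup) (h0 : 0 ∉ M)
    (hneg : ∀ x ∈ M, -x ∈ M) (hcard : Multiset.card M + 2 = 2 * m) :
    (M.map (parity m)).count 1 = 2 * (m / 2) := by
  have hS : (⟨M, hM⟩ : Finset _) = univ \ {0, (m : ZMod (2 * m))} :=
    eq_univ_sdiff_zero_half h0 hneg hcard
  rw [← card_filter_parity_univ_sdiff, ← hS, Multiset.count_map]
  simp_rw [eq_comm (a := (1 : ZMod 2))]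
  rfl

end HalfModulus

/-- For `L ≡ 2` or `3 (mod 4)` and `z = 6L+2`, there is no choice of shift values
`s i 1 < s i 2 < s i 3` in `{0, ..., z-1}` making all `6L` within-circulant differences
modulo `z` pairwise distinct. -/
theorem stmt_13 (L : ℕ) (hL : L % 4 = 2 ∨ L % 4 = 3) (s : ℕ → ℕ → ℕ)
    (hs : ∀ i ∈ Finset.Icc 1 L,
      s i 1 < s i 2 ∧ s i 2 < s i 3 ∧ s i 3 < 6 * L + 2) :
    ¬ (shiftDiffsMod L (6 * L + 2) s).Nodup := by
  intro hnd
  obtain ⟨m, hm, hz⟩ : ∃ m, m = 3 * L + 1 ∧ 6 * L + 2 = 2 * m := ⟨_, rfl, by ring⟩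
  have : NeZero m := ⟨by omega⟩
  rw [hz] at hs
  rw [hz, shiftDiffsMod_eq_familyDiffs] at hnd
  set M := familyDiffs (Icc 1 L) (fun i => (s i 1 : ZMod (2 * m))) (fun i => s i 2)
    (fun i => s i 3)
  have h0 : 0 ∉ M := zero_notMem_familyDiffs _ _ _ _ fun i hi => by
    obtain ⟨h12, h23, h3⟩ := hs i hi
    exact ⟨ZMod.natCast_ne_natCast_of_lt h12 (by omega),
      ZMod.natCast_ne_natCast_of_lt (by omega) h3, ZMod.natCast_ne_natCast_of_lt h23 h3⟩
  have hcount : (M.map (parity m)).count 1 = 2 * (m / 2) :=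
    count_one_map_parity_of_nodup hnd h0 (fun _ => neg_mem_familyDiffs _ _ _ _)
      (by simp only [M, card_familyDiffs, Nat.card_Icc]; omega)
  have hdvd := hcount ▸ four_dvd_count_one_familyDiffs (Icc 1 L) _ _ _ (parity m).toAddMonoidHom
  omega
end

section
/- A Tanner graph of a binary parity-check matrix containing a z×z circulant with column weight at least 3 (with z ≥ 3 and distinct shift values) contains a cycle of length at most 6; in particular its girth is at most 6. -/
/-- The Tanner graph of a binary matrix `H`: the bipartite graph on rows (check nodes)
and columns (variable nodes), with an edge between row `r` and column `c` iff
`H r c = 1`. -/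
def tannerGraph {R C : Type*} (H : Matrix R C (ZMod 2)) : SimpleGraph (R ⊕ C) where
  Adj x y :=
    (∃ r c, x = Sum.inl r ∧ y = Sum.inr c ∧ H r c = 1) ∨
    (∃ r c, x = Sum.inr c ∧ y = Sum.inl r ∧ H r c = 1)
  symm := by
    constructor
    rintro x y (⟨r, c, hx, hy, h1⟩ | ⟨r, c, hx, hy, h1⟩)
    · exact Or.inr ⟨r, c, hy, hx, h1⟩
    · exact Or.inl ⟨r, c, hy, hx, h1⟩
  loopless := by
    constructor
    rintro x (⟨r, c, hx, hy, h1⟩ | ⟨r, c, hx, hy, h1⟩) <;> subst hx <;> simp_all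

open SimpleGraph

theorem tannerGraph_adj_inl_inr {R C : Type*} {H : Matrix R C (ZMod 2)} {r : R} {c : C} :
    (tannerGraph H).Adj (.inl r) (.inr c) ↔ H r c = 1 := by
  simp [tannerGraph]

theorem tannerGraph_girth_le_six {R C : Type*} {H : Matrix R C (ZMod 2)}
    {r₁ r₂ r₃ : R} {c₁ c₂ c₃ : C} (hr₁₂ : r₁ ≠ r₂) (hr₁₃ : r₁ ≠ r₃) (hr₂₃ : r₂ ≠ r₃)
    (hc₁₂ : c₁ ≠ c₂) (hc₁₃ : c₁ ≠ c₃) (hc₂₃ : c₂ ≠ c₃)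
    (h₁₁ : H r₁ c₁ = 1) (h₁₂ : H r₁ c₂ = 1) (h₂₂ : H r₂ c₂ = 1) (h₂₃ : H r₂ c₃ = 1)
    (h₃₃ : H r₃ c₃ = 1) (h₃₁ : H r₃ c₁ = 1) :
    (tannerGraph H).girth ≤ 6 := by
  have adj {r : R} {c : C} (h : H r c = 1) : (tannerGraph H).Adj (.inl r) (.inr c) :=
    tannerGraph_adj_inl_inr.2 h
  let w : (tannerGraph H).Walk (.inr c₁) (.inr c₁) :=
    .cons (adj h₁₁).symm <| .cons (adj h₁₂) <| .cons (adj h₂₂).symm <| .cons (adj h₂₃) <|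
      .cons (adj h₃₃).symm <| .cons (adj h₃₁) .nil
  have hw : w.IsCycle := by
    rw [Walk.cons_isCycle_iff, Walk.isPath_def]
    simp [hr₁₂, hr₁₃, hr₂₃, hc₁₂, hc₁₃, hc₂₃, hc₁₂.symm, hc₁₃.symm]
  exact girth_le_length hw

/-- Columns `s₁, s₂, s₃` and rows `s₁ + s₂, s₂ + s₃, s₃ + s₁`: column `sᵢ` meets row `sᵢ + sⱼ`
through the shift `sⱼ`. -/
theorem tannerGraph_girth_le_six_of_circulant {R C A : Type*} [AddCommGroup A]
    {H : Matrix R C (ZMod 2)} {ρ : A → R} {γ : A → C}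
    (hρ : Function.Injective ρ) (hγ : Function.Injective γ)
    {s₁ s₂ s₃ : A} (h₁₂ : s₁ ≠ s₂) (h₁₃ : s₁ ≠ s₃) (h₂₃ : s₂ ≠ s₃)
    (hs₁ : ∀ c, H (ρ (c + s₁)) (γ c) = 1) (hs₂ : ∀ c, H (ρ (c + s₂)) (γ c) = 1)
    (hs₃ : ∀ c, H (ρ (c + s₃)) (γ c) = 1) :
    (tannerGraph H).girth ≤ 6 := by
  refine tannerGraph_girth_le_six (r₁ := ρ (s₁ + s₂)) (r₂ := ρ (s₂ + s₃)) (r₃ := ρ (s₃ + s₁))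
    (hρ.ne ?_) (hρ.ne ?_) (hρ.ne ?_) (hγ.ne h₁₂) (hγ.ne h₁₃) (hγ.ne h₂₃)
    (hs₂ s₁) (add_comm s₂ s₁ ▸ hs₁ s₂) (hs₃ s₂) (add_comm s₃ s₂ ▸ hs₂ s₃) (hs₁ s₃)
    (add_comm s₁ s₃ ▸ hs₃ s₁)
  · rw [add_comm s₂]; exact (add_left_injective s₂).ne h₁₃
  · rw [add_comm s₃]; exact (add_right_injective s₁).ne h₂₃
  · rw [add_comm s₃]; exact (add_left_injective s₃).ne h₁₂.symm

theorem stmt_18_general {R C : Type*} (H : Matrix R C (ZMod 2)) (z : ℕ)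
    (s₁ s₂ s₃ : ZMod z) (h12 : s₁ ≠ s₂) (h13 : s₁ ≠ s₃) (h23 : s₂ ≠ s₃)
    (ρ : ZMod z → R) (γ : ZMod z → C)
    (hρ : Function.Injective ρ) (hγ : Function.Injective γ)
    (hcirc : ∀ c : ZMod z, ∀ s ∈ ({s₁, s₂, s₃} : Finset (ZMod z)),
      H (ρ (c + s)) (γ c) = 1) :
    (tannerGraph H).girth ≤ 6 :=
  tannerGraph_girth_le_six_of_circulant hρ hγ h12 h13 h23
    (fun c ↦ hcirc c s₁ (by simp)) (fun c ↦ hcirc c s₂ (by simp)) (fun c ↦ hcirc c s₃ (by simp))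

/-- If a binary parity-check matrix `H` contains a `z × z` circulant (`z ≥ 3`) with three
distinct shift values `s₁, s₂, s₃` (column weight at least 3), embedded via injective row
and column maps `ρ`, `γ`, then the Tanner graph of `H` has a cycle of length at most 6;
in particular its girth is at most 6. -/
theorem stmt_18 {R C : Type*} (H : Matrix R C (ZMod 2)) (z : ℕ) (hz : 3 ≤ z)
    (s₁ s₂ s₃ : ZMod z) (h12 : s₁ ≠ s₂) (h13 : s₁ ≠ s₃) (h23 : s₂ ≠ s₃)
    (ρ : ZMod z → R) (γ : ZMod z → C)
    (hρ : Function.Injective ρ) (hγ : Function.Injective γ)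
    (hcirc : ∀ c : ZMod z, ∀ s ∈ ({s₁, s₂, s₃} : Finset (ZMod z)),
      H (ρ (c + s)) (γ c) = 1) :
    (tannerGraph H).girth ≤ 6 :=
  stmt_18_general H z s₁ s₂ s₃ h12 h13 h23 ρ γ hρ hγ hcirc
end
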